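/- R is not a chain ring: there exist ideals I and J of R such that I is not contained in J and J is not contained in I. -/
import Mathlib


open Polynomial

noncomputable section

/-- The ring `R = ℤ₄[u]/(u³ − 1)`. -/
abbrev R : Type := Polynomial (ZMod 4) ⧸ Ideal.span ({Polynomial.X ^ 3 - 1} : Set (Polynomial (ZMod 4)))

/-- The image `u` of the variable in `R`. -/
def u : R := Ideal.Quotient.mk _ Polynomial.X

instance : DecidableEq R := Classical.decEq R

lemma u_pow_three : u ^ 3 = 1 := by
  have h : (Ideal.Quotient.mk (Ideal.span ({Polynomial.X ^ 3 - 1} : Set (Polynomial (ZMod 4))))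
      (Polynomial.X ^ 3 - 1) : R) = 0 :=
    Ideal.Quotient.eq_zero_iff_mem.mpr (Ideal.subset_span rfl)
  have h2 : (u ^ 3 - 1 : R) = 0 := by
    simpa [u, map_sub, map_pow] using h
  linear_combination h2

/-- The ring automorphism `σ` of `R` determined by `σ(u) = u²`. -/
def sigmaR : R →+* R :=
  Ideal.Quotient.lift _ (Polynomial.aeval (u ^ 2)).toRingHom (by
    intro p hp
    obtain ⟨q, rfl⟩ := Ideal.mem_span_singleton.mp hp
    have h6 : ((u ^ 2) ^ 3 : R) = 1 := by
      rw [← pow_mul]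
      have : (u : R) ^ (2 * 3) = (u ^ 3) ^ 2 := by ring
      rw [this, u_pow_three, one_pow]
    simp [map_mul, map_sub, map_pow, h6])

/-- The element `δ = 2 + 2u + 2u²` of `R`. -/
def δR : R := 2 + 2 * u + 2 * u ^ 2

/-- The map `ρ : Rⁿ → Rⁿ`, reversing coordinates and applying `σ` coordinatewise. -/
def ρmap (n : ℕ) (x : Fin n → R) : Fin n → R := fun i => sigmaR (x (Fin.rev i))

/-- The 4-letter DNA alphabet. -/
inductive DNA : Type
  | A | C | G | T
deriving DecidableEq, Inhabited, Repr

/-- Watson–Crick complement of a DNA nucleotide. -/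
def DNA.compl : DNA → DNA
  | .A => .T
  | .T => .A
  | .C => .G
  | .G => .C

/-- Complement of a DNA string. -/
def complStr (s : List DNA) : List DNA := s.map DNA.compl

/-- Reverse of a DNA string. -/
def revStr (s : List DNA) : List DNA := s.reverse

/-- Reverse-complement of a DNA string. -/
def rcStr (s : List DNA) : List DNA := s.reverse.map DNA.compl

/-- Hamming distance between two DNA strings (of equal length). -/
def dH (s t : List DNA) : ℕ := ((s.zip t).filter fun p => p.1 ≠ p.2).length

/-- GC-content of a DNA string: the number of positions carrying `G` or `C`. -/
def gcContent (s : List DNA) : ℕ := (s.filter fun d => d = DNA.G ∨ d = DNA.C).length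

/-- A DNA string has no homopolymer run of length greater than `2` iff it has no three
consecutive equal symbols. -/
def NoHomopolymer3 (s : List DNA) : Prop := ¬ ∃ (l r : List DNA) (a : DNA), s = l ++ [a, a, a] ++ r

/-- Blockwise extension of a map `ψ : R → Σ³` to vectors over `R`, by concatenation. -/
def Ψ (ψ : R → List DNA) {n : ℕ} (x : Fin n → R) : List DNA := (List.ofFn x).flatMap ψ

/-- The map `ψ₂` from the ideal `2R` to DNA strings of length `3`
(the restriction of the DNA map of Table I to `2R`; its value outside `2R` is irrelevant). -/
def ψ₂ (x : R) : List DNA :=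
  if x = 0 then [.G, .A, .G]
  else if x = 2 then [.C, .G, .A]
  else if x = 2 * u then [.G, .T, .G]
  else if x = 2 * u ^ 2 then [.A, .G, .C]
  else if x = 2 + 2 * u then [.T, .C, .G]
  else if x = 2 + 2 * u ^ 2 then [.C, .A, .C]
  else if x = 2 * u + 2 * u ^ 2 then [.G, .C, .T]
  else [.C, .T, .C]

/-- The rows of the Reed–Muller type generator matrix `G_{1,m}` over `R` (with parameter `z`):
`Gmat z m i j` is the entry of `G_{1,m}` in row `i` and column `j`.  Here `G_{1,0} = [z]` and
`G_{1,m+1} = [[G_{1,m}, G_{1,m}], [0 … 0, z … z]]`, which for `m = 1` gives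
`G_{1,1} = [[z,z],[0,z]]`. -/
def Gmat (z : R) : (m : ℕ) → Fin (m + 1) → Fin (2 ^ m) → R
  | 0, _, _ => z
  | m + 1, i, j =>
    if hi : (i : ℕ) < m + 1 then
      Gmat z m ⟨i, hi⟩ ⟨(j : ℕ) % 2 ^ m, Nat.mod_lt _ (Nat.two_pow_pos m)⟩
    else if (j : ℕ) < 2 ^ m then 0 else z

/-- The Reed–Muller type code `R(1,m)`: the `R`-submodule of `R^{2^m}` generated by the rows
of `G_{1,m}`. -/
def RM (z : R) (m : ℕ) : Submodule R (Fin (2 ^ m) → R) := Submodule.span R (Set.range (Gmat z m))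

/-- Hamming weight of a vector over `R`. -/
def wt {N : ℕ} (c : Fin N → R) : ℕ := (Finset.univ.filter fun j => c j ≠ 0).card

/-- Hamming distance between two vectors over `R`. -/
def hdistR {N : ℕ} (c c' : Fin N → R) : ℕ := (Finset.univ.filter fun j => c j ≠ c' j).card

/-- Coordinate reversal of a vector over `R`. -/
def revVec {N : ℕ} (c : Fin N → R) : Fin N → R := fun j => c (Fin.rev j)

/-- `a + bu + cu²` as an element of `R`, for `a, b, c ∈ ℤ₄`. -/
def toR (a b c : ZMod 4) : R :=
  algebraMap (ZMod 4) R a + algebraMap (ZMod 4) R b * u + algebraMap (ZMod 4) R c * u ^ 2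

end

/-- Evaluation at `u = 1`, a ring hom `R → ℤ₄`. -/
noncomputable def evalOneR : R →+* ZMod 4 :=
  Ideal.Quotient.lift _ (Polynomial.evalRingHom (1 : ZMod 4)) (by
    intro p hp
    obtain ⟨q, rfl⟩ := Ideal.mem_span_singleton.mp hp
    simp)

lemma two_not_mem : (2 : R) ∉ Ideal.span ({u - 1} : Set R) := by
  intro h
  have hd : (u - 1 : R) ∣ 2 := Ideal.mem_span_singleton.mp h
  have hd2 : evalOneR (u - 1) ∣ evalOneR 2 := map_dvd _ hd
  have h1 : evalOneR (u - 1) = 0 := by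
    have hu : (u - 1 : R) = Ideal.Quotient.mk _ (Polynomial.X - 1) := by
      simp [u]
    rw [hu]
    simp [evalOneR]
  have h2 : evalOneR 2 = 2 := map_ofNat _ 2
  rw [h1, h2, zero_dvd_iff] at hd2
  exact absurd hd2 (by decide)

lemma uminus_not_mem : (u - 1 : R) ∉ Ideal.span ({(2 : R)} : Set R) := by
  intro h
  have hd : (2 : R) ∣ u - 1 := Ideal.mem_span_singleton.mp h
  obtain ⟨r, hr⟩ := hd
  obtain ⟨p, rfl⟩ := Ideal.Quotient.mk_surjective r
  have hmem : (Polynomial.X - 1 - 2 * p : Polynomial (ZMod 4)) ∈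
      Ideal.span ({Polynomial.X ^ 3 - 1} : Set (Polynomial (ZMod 4))) := by
    rw [← Ideal.Quotient.eq_zero_iff_mem]
    have heq : (Ideal.Quotient.mk (Ideal.span ({Polynomial.X ^ 3 - 1} :
        Set (Polynomial (ZMod 4)))) (Polynomial.X - 1 - 2 * p) : R)
        = (u - 1) - 2 * Ideal.Quotient.mk _ p := by
      simp [u, map_sub, map_mul, map_ofNat]
    rw [heq, hr]
    ring
  have hdvd : (Polynomial.X ^ 3 - 1 : Polynomial (ZMod 4)) ∣
      (Polynomial.X - 1 - 2 * p) := Ideal.mem_span_singleton.mp hmem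
  have hdd : (2 : ℕ) ∣ 4 := by norm_num
  set φ : Polynomial (ZMod 4) →+* Polynomial (ZMod 2) :=
    Polynomial.mapRingHom (ZMod.castHom hdd (ZMod 2)) with hφ
  have hdvd2 : φ (Polynomial.X ^ 3 - 1) ∣ φ (Polynomial.X - 1 - 2 * p) := _root_.map_dvd φ hdvd
  have htwo : φ 2 = 0 := by
    rw [map_ofNat]
    rw [← map_ofNat (Polynomial.C : ZMod 2 →+* Polynomial (ZMod 2)) 2,
        show (2 : ZMod 2) = 0 by decide, map_zero]
  have hA : φ (Polynomial.X ^ 3 - 1) = Polynomial.X ^ 3 - 1 := by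
    rw [map_sub, map_pow, map_one]
    simp [hφ]
  have hB : φ (Polynomial.X - 1 - 2 * p) = Polynomial.X - 1 := by
    rw [map_sub, map_mul, htwo, zero_mul, sub_zero, map_sub, map_one]
    simp [hφ]
  rw [hA, hB] at hdvd2
  have hne : (Polynomial.X - 1 : Polynomial (ZMod 2)) ≠ 0 := by
    simpa using Polynomial.X_sub_C_ne_zero (R := ZMod 2) 1
  have hle := Polynomial.natDegree_le_of_dvd hdvd2 hne
  have h3 : (Polynomial.X ^ 3 - 1 : Polynomial (ZMod 2)).natDegree = 3 := by
    simpa using Polynomial.natDegree_X_pow_sub_C (R := ZMod 2) (n := 3) (r := 1)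
  have h1 : (Polynomial.X - 1 : Polynomial (ZMod 2)).natDegree = 1 := by
    simpa using Polynomial.natDegree_X_sub_C (1 : ZMod 2)
  rw [h3, h1] at hle
  omega

/-- `R` is not a chain ring: it has two ideals neither of which contains the other. -/
theorem stmt1 : ∃ I J : Ideal R, ¬ I ≤ J ∧ ¬ J ≤ I := by
  refine ⟨Ideal.span ({(2 : R)} : Set R), Ideal.span ({u - 1} : Set R), ?_, ?_⟩
  · intro hle
    exact two_not_mem (hle (Ideal.subset_span rfl))
  · intro hle
    exact uminus_not_mem (hle (Ideal.subset_span rfl))
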